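/- arXiv:0909.5033 — 2 statements merged into one kernel-verified Lean document; each statement's English description precedes it below -/
import Mathlib

section
/- Let G be K_{3,5} or K_{4,4}. For every circuit Y of the cycle matroid M(G), the contraction M(G)/Y has no minor isomorphic to M(K_5), the cycle matroid of the complete graph on five vertices. -/
/-! Common definitions for formalizing "On the Interplay between Graphic and
Cographic Matroids with Graphic Cocircuits" (arXiv:0909.5033). -/

section MatroidDefs

variable {α β : Type*}

/-- Deletion of a set of elements from a matroid: `M \ D`. -/
def mDel (M : Matroid α) (D : Set α) : Matroid α := M.restrict (M.E \ D)

/-- Contraction of a set of elements in a matroid: `M / C = (M✶ \ C)✶`. -/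
def mCon (M : Matroid α) (C : Set α) : Matroid α := (mDel M✶ C)✶

/-- `MinorOf N M` means `N` can be obtained from `M` by a sequence of deletions
and contractions. -/
inductive MinorOf : Matroid α → Matroid α → Prop
  | refl (M : Matroid α) : MinorOf M M
  | del {N M : Matroid α} (D : Set α) : MinorOf N M → MinorOf (mDel N D) M
  | con {N M : Matroid α} (C : Set α) : MinorOf N M → MinorOf (mCon N C) M

/-- `C` is a circuit of the matroid `M`: a minimal dependent set. -/
def IsCircuitOf (M : Matroid α) (C : Set α) : Prop :=
  M.Dep C ∧ ∀ D, D ⊂ C → M.Indep D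

/-- `C` is a cocircuit of `M`: a circuit of the dual matroid. -/
def IsCocircuitOf (M : Matroid α) (C : Set α) : Prop := IsCircuitOf M✶ C

/-- Matroid isomorphism: a bijection between the ground sets preserving independence. -/
def MatroidIso (M : Matroid α) (N : Matroid β) : Prop :=
  ∃ f : α → β, Set.BijOn f M.E N.E ∧ ∀ I ⊆ M.E, (M.Indep I ↔ N.Indep (f '' I))

/-- `M` has a minor isomorphic to `N`. -/
def HasMinorIso (M : Matroid α) (N : Matroid β) : Prop :=
  ∃ M₀ : Matroid α, MinorOf M₀ M ∧ MatroidIso M₀ N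

/-- A matroid is simple if it has no circuits of size one or two. -/
def IsSimpleMatroid (M : Matroid α) : Prop :=
  ∀ C, IsCircuitOf M C → C.ncard ≠ 1 ∧ C.ncard ≠ 2

/-- A `k`-separation of a matroid (rank condition phrased via bases of the two sides,
which all have the same cardinality): `r(X) + r(Y) - r(M) ≤ k - 1`. -/
def MatroidKSeparation (M : Matroid α) (k : ℕ) : Prop :=
  ∃ X Y : Set α, X ∪ Y = M.E ∧ Disjoint X Y ∧ k ≤ X.ncard ∧ k ≤ Y.ncard ∧
    ∀ I J B, M.IsBasis I X → M.IsBasis J Y → M.IsBase B →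
      I.ncard + J.ncard + 1 ≤ B.ncard + k

/-- A matroid is 3-connected if it has no 1-separation and no 2-separation. -/
def MatroidThreeConnected (M : Matroid α) : Prop :=
  ¬ MatroidKSeparation M 1 ∧ ¬ MatroidKSeparation M 2

/-- Representability of a matroid over a field `F`. -/
def IsRepresentableOver (M : Matroid α) (F : Type) [Field F] : Prop :=
  ∃ (n : ℕ) (φ : α → (Fin n → F)), ∀ I, I ⊆ M.E →
    (M.Indep I ↔ LinearIndependent F (fun x : I => φ x))

/-- A matroid is regular if it is representable over every field. -/
def IsRegularMatroid (M : Matroid α) : Prop :=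
  ∀ (F : Type) [Field F], IsRepresentableOver M F

end MatroidDefs

section GraphDefs

variable {V W : Type*}

/-- A circle of a graph: the edge set of a cycle. -/
def IsGraphCircle (G : SimpleGraph V) (X : Set (Sym2 V)) : Prop :=
  ∃ (u : V) (c : G.Walk u u), c.IsCycle ∧ X = {e | e ∈ c.edges}

/-- The contraction `G/X` of a set of edges `X` in a graph `G`: vertices are the
connected components of the subgraph formed by the edges of `X`, and distinct
components are adjacent if `G` has an edge outside `X` joining them. -/
def contractGraph (G : SimpleGraph V) (X : Set (Sym2 V)) :
    SimpleGraph (SimpleGraph.fromEdgeSet X ⊓ G).ConnectedComponent :=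
  SimpleGraph.fromRel fun a b => ∃ u v : V, G.Adj u v ∧ s(u, v) ∉ X ∧
    a = (SimpleGraph.fromEdgeSet X ⊓ G).connectedComponentMk u ∧
    b = (SimpleGraph.fromEdgeSet X ⊓ G).connectedComponentMk v

/-- `G` has a minor isomorphic to `H` (branch-set/minor-model definition). -/
def HasGraphMinor (G : SimpleGraph V) (H : SimpleGraph W) : Prop :=
  ∃ φ : W → Set V,
    (∀ w, (φ w).Nonempty) ∧
    (∀ w, ((G.induce (φ w)).Connected)) ∧
    (Pairwise fun w₁ w₂ => Disjoint (φ w₁) (φ w₂)) ∧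
    ∀ ⦃w₁ w₂⦄, H.Adj w₁ w₂ → ∃ v₁ ∈ φ w₁, ∃ v₂ ∈ φ w₂, G.Adj v₁ v₂

/-- The degree of a vertex, as the cardinality of its neighbour set. -/
noncomputable def vDeg (G : SimpleGraph V) (v : V) : ℕ := (G.neighborSet v).ncard

/-- The set of end-vertices of a set of edges. -/
def edgeEndpoints (A : Set (Sym2 V)) : Set V := {v | ∃ e ∈ A, v ∈ e}

/-- A Tutte `k`-separation of a graph: a partition `(A, B)` of the edge set with
`min(|A|,|B|) ≥ k` and exactly `k` vertices in common between `G[A]` and `G[B]`. -/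
def GraphKSeparation (G : SimpleGraph V) (k : ℕ) : Prop :=
  ∃ A B : Set (Sym2 V), A ∪ B = G.edgeSet ∧ Disjoint A B ∧
    k ≤ A.ncard ∧ k ≤ B.ncard ∧ (edgeEndpoints A ∩ edgeEndpoints B).ncard = k

/-- Tutte 3-connectivity of a graph. -/
def GraphThreeConnected (G : SimpleGraph V) : Prop :=
  G.Connected ∧ ¬ GraphKSeparation G 1 ∧ ¬ GraphKSeparation G 2

/-- `M` is the cycle matroid of the graph `G`: the ground set is the edge set of `G`
and the circuits are exactly the circles (edge sets of cycles) of `G`. -/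
def IsCycleMatroidOf (M : Matroid (Sym2 V)) (G : SimpleGraph V) : Prop :=
  M.E = G.edgeSet ∧ ∀ C, IsCircuitOf M C ↔ IsGraphCircle G C

/-- A matroid is graphic if it is isomorphic to the cycle matroid of some graph. -/
def IsGraphicMatroid {α : Type*} (M : Matroid α) : Prop :=
  ∃ (V : Type) (G : SimpleGraph V) (N : Matroid (Sym2 V)),
    IsCycleMatroidOf N G ∧ MatroidIso M N

/-- A matroid is cographic if its dual is graphic. -/
def IsCographicMatroid {α : Type*} (M : Matroid α) : Prop := IsGraphicMatroid M✶

/-- Operation O2 data at a vertex `v`: a partition of the neighbours of `v`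
(of degree at least 4) into two parts of size at least two each (so that both new
vertices have degree greater than 2). -/
def IsO2Partition (G : SimpleGraph V) (v : V) (S₁ S₂ : Set V) : Prop :=
  4 ≤ (G.neighborSet v).ncard ∧ S₁ ∪ S₂ = G.neighborSet v ∧ Disjoint S₁ S₂ ∧
    2 ≤ S₁.ncard ∧ 2 ≤ S₂.ncard

/-- The graph obtained from `G` by operation O2 at `v`, with neighbour partition
`(S₁, S₂)` : the vertex `some v` plays the role of `v₁`, the new vertex `none`
plays the role of `v₂`, and `v₁`, `v₂` are adjacent. -/
def o2Graph (G : SimpleGraph V) (v : V) (S₁ S₂ : Set V) : SimpleGraph (Option V) :=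
  SimpleGraph.fromRel fun a b =>
    (∃ u w, u ≠ v ∧ w ≠ v ∧ G.Adj u w ∧ a = some u ∧ b = some w) ∨
    (∃ u, u ∈ S₁ ∧ a = some v ∧ b = some u) ∨
    (∃ u, u ∈ S₂ ∧ a = none ∧ b = some u) ∨
    (a = some v ∧ b = none)

end GraphDefs

section NamedGraphs

/-- The complete graph `K₅`. -/
def K5 : SimpleGraph (Fin 5) := SimpleGraph.completeGraph (Fin 5)

/-- The complete bipartite graph `K₃,₃`. -/
def K33 : SimpleGraph (Fin 3 ⊕ Fin 3) := completeBipartiteGraph (Fin 3) (Fin 3)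

/-- The complete bipartite graph `K₃,₅`. -/
def K35 : SimpleGraph (Fin 3 ⊕ Fin 5) := completeBipartiteGraph (Fin 3) (Fin 5)

/-- The complete bipartite graph `K₄,₄`. -/
def K44 : SimpleGraph (Fin 4 ⊕ Fin 4) := completeBipartiteGraph (Fin 4) (Fin 4)

/-- `K₄,₄` minus an edge. -/
def K44minus : SimpleGraph (Fin 4 ⊕ Fin 4) :=
  K44.deleteEdges {s(Sum.inl 0, Sum.inr 0)}

/-- The complete bipartite graph `K₃,ₙ`, with side `A` of size 3 and side `B` of size `n`. -/
def K3n (n : ℕ) : SimpleGraph (Fin 3 ⊕ Fin n) := completeBipartiteGraph (Fin 3) (Fin n)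

/-- `K₃,ₙ` plus one edge inside the side `A`. -/
def K3nPlus1 (n : ℕ) : SimpleGraph (Fin 3 ⊕ Fin n) :=
  K3n n ⊔ SimpleGraph.fromEdgeSet {s(Sum.inl 0, Sum.inl 1)}

/-- `K₃,ₙ` plus two edges inside the side `A`. -/
def K3nPlus2 (n : ℕ) : SimpleGraph (Fin 3 ⊕ Fin n) :=
  K3n n ⊔ SimpleGraph.fromEdgeSet {s(Sum.inl 0, Sum.inl 1), s(Sum.inl 0, Sum.inl 2)}

/-- `K₃,ₙ` plus all three edges inside the side `A`. -/
def K3nPlus3 (n : ℕ) : SimpleGraph (Fin 3 ⊕ Fin n) :=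
  K3n n ⊔ SimpleGraph.fromEdgeSet
    {s(Sum.inl 0, Sum.inl 1), s(Sum.inl 0, Sum.inl 2), s(Sum.inl 1, Sum.inl 2)}

/-- The family `{K₃,ₙ, K₃,ₙ⁺¹, K₃,ₙ⁺², K₃,ₙ⁺³}`. -/
def K3nFamily (n : ℕ) : Set (SimpleGraph (Fin 3 ⊕ Fin n)) :=
  {K3n n, K3nPlus1 n, K3nPlus2 n, K3nPlus3 n}

end NamedGraphs

section SignedGraphs

variable {V : Type*}

/-- The number of negative edges of a walk, for a sign function `σ`
(`σ e = false` meaning that `e` is negative). -/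
def negCount (σ : Sym2 V → Bool) {G : SimpleGraph V} {u v : V} (c : G.Walk u v) : ℕ :=
  (c.edges.filter fun e => !σ e).length

/-- Circuits of a signed graph `(G, σ)`: a positive cycle; or two negative cycles
meeting in exactly one vertex; or two vertex-disjoint negative cycles joined by a
path meeting the cycles only in its end vertices. -/
def IsSignedCircuit (G : SimpleGraph V) (σ : Sym2 V → Bool) (C : Set (Sym2 V)) : Prop :=
  (∃ (u : V) (c : G.Walk u u), c.IsCycle ∧ Even (negCount σ c) ∧
      C = {e | e ∈ c.edges}) ∨
  (∃ (w : V) (c₁ c₂ : G.Walk w w), c₁.IsCycle ∧ c₂.IsCycle ∧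
      Odd (negCount σ c₁) ∧ Odd (negCount σ c₂) ∧
      {x | x ∈ c₁.support} ∩ {x | x ∈ c₂.support} = {w} ∧
      C = {e | e ∈ c₁.edges} ∪ {e | e ∈ c₂.edges}) ∨
  (∃ (u v : V) (c₁ : G.Walk u u) (c₂ : G.Walk v v) (p : G.Walk u v),
      c₁.IsCycle ∧ c₂.IsCycle ∧ p.IsPath ∧
      Odd (negCount σ c₁) ∧ Odd (negCount σ c₂) ∧
      {x | x ∈ c₁.support} ∩ {x | x ∈ c₂.support} = ∅ ∧
      {x | x ∈ p.support} ∩ {x | x ∈ c₁.support} = {u} ∧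
      {x | x ∈ p.support} ∩ {x | x ∈ c₂.support} = {v} ∧
      C = {e | e ∈ c₁.edges} ∪ {e | e ∈ c₂.edges} ∪ {e | e ∈ p.edges})

/-- `M` is the signed-graphic matroid of the signed graph `(G, σ)`. -/
def IsSignedGraphicMatroidOf (M : Matroid (Sym2 V)) (G : SimpleGraph V)
    (σ : Sym2 V → Bool) : Prop :=
  M.E = G.edgeSet ∧ ∀ C, IsCircuitOf M C ↔ IsSignedCircuit G σ C

/-- A matroid is signed-graphic if it is isomorphic to the matroid of some signed graph. -/
def IsSignedGraphicMatroid {α : Type*} (M : Matroid α) : Prop :=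
  ∃ (V : Type) (G : SimpleGraph V) (σ : Sym2 V → Bool) (N : Matroid (Sym2 V)),
    IsSignedGraphicMatroidOf N G σ ∧ MatroidIso M N

/-!
Both graphs are bipartite on eight vertices, so a circle `Y` has at least four vertices and at
most four vertices lie off it. Contracting `Y` turns its chords into loops and makes parallel any
two edges joining the same vertex off `Y` to `Y`. So a set of pairwise independent elements of
`M(G) / Y` injects into the edges of the graph `G / Y`: at most one per vertex off `Y`, plus the
edges of a bipartite graph on at most four vertices, at most `4 + 4 = 8` in all. A minor
isomorphic to `M(K₅)` would give ten of them.
-/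

open Set SimpleGraph
open scoped Matroid

section MatroidLemmas

variable {α β : Type*} {M N : Matroid α} {C I : Set α}

lemma isCircuitOf_iff_isCircuit : IsCircuitOf M C ↔ M.IsCircuit C :=
  Matroid.isCircuit_iff_forall_ssubset.symm

lemma MinorOf.ground_subset (h : MinorOf N M) : N.E ⊆ M.E := by
  induction h with
  | refl => rfl
  | del D _ ih => exact sdiff_subset.trans ih
  | con C _ ih => exact sdiff_subset.trans ih

lemma MinorOf.indep (h : MinorOf N M) (hI : N.Indep I) : M.Indep I := by
  induction h with
  | refl => exact hI
  | del D _ ih => exact ih (Matroid.Indep.of_delete hI)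
  | con C _ ih => exact ih (Matroid.Indep.of_contract hI)

lemma Matroid.IsCircuit.indep_union_of_contract_indep {e : α} (hC : M.IsCircuit C) (he : e ∈ C)
    (hI : (M ／ C).Indep I) : M.Indep (I ∪ (C \ {e})) :=
  ((hC.sdiff_singleton_isBasis he).contract_indep_iff.1 hI).1

lemma MatroidIso.ncard_ground_eq {N : Matroid β} (h : MatroidIso M N) :
    M.E.ncard = N.E.ncard := by
  obtain ⟨f, hf, -⟩ := h
  exact hf.ncard_eq

lemma MatroidIso.indep_pair {N : Matroid β} (h : MatroidIso M N)
    (hN : ∀ e ∈ N.E, ∀ f ∈ N.E, N.Indep {e, f}) {e f : α} (he : e ∈ M.E) (hf : f ∈ M.E) :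
    M.Indep {e, f} := by
  obtain ⟨φ, hφ, hind⟩ := h
  rw [hind _ (pair_subset he hf), image_pair]
  exact hN _ (hφ.mapsTo he) _ (hφ.mapsTo hf)

end MatroidLemmas

namespace SimpleGraph.Walk

variable {V : Type*} {G : SimpleGraph V}

lemma exists_eq_append_cons_of_mem_edges {a b : V} (p : G.Walk a b) {y : Sym2 V}
    (hy : y ∈ p.edges) :
    ∃ (u₁ u₂ : V) (h : G.Adj u₁ u₂) (p₁ : G.Walk a u₁) (p₂ : G.Walk u₂ b),
      y = s(u₁, u₂) ∧ p = p₁.append (cons h p₂) := by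
  induction p with
  | nil => simp at hy
  | cons h' q ih =>
    rcases List.mem_cons.1 hy with hy | hy
    · exact ⟨_, _, h', nil, q, hy, rfl⟩
    · obtain ⟨u₁, u₂, h, p₁, p₂, rfl, rfl⟩ := ih hy
      exact ⟨u₁, u₂, h, cons h' p₁, p₂, rfl, rfl⟩

lemma exists_walk_edges_subset {u v a b : V} (p : G.Walk u v) (ha : a ∈ p.support)
    (hb : b ∈ p.support) : ∃ q : G.Walk a b, q.edges ⊆ p.edges := by
  classical
  refine ⟨(p.takeUntil a ha).reverse.append (p.takeUntil b hb), fun e he => ?_⟩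
  rw [edges_append, edges_reverse, List.mem_append, List.mem_reverse] at he
  exact he.elim (edges_takeUntil_subset_edges _ _ ·) (edges_takeUntil_subset_edges _ _ ·)

lemma IsCycle.exists_walk_edges_avoiding {w : V} {c : G.Walk w w} (hc : c.IsCycle) {y : Sym2 V}
    (hy : y ∈ c.edges) {a b : V} (ha : a ∈ c.support) (hb : b ∈ c.support) :
    ∃ q : G.Walk a b, ∀ e ∈ q.edges, e ∈ c.edges ∧ e ≠ y := by
  obtain ⟨u₁, u₂, h, p₁, p₂, rfl, rfl⟩ := c.exists_eq_append_cons_of_mem_edges hy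
  have hnd := hc.edges_nodup
  simp only [edges_append, edges_cons, List.nodup_append, List.nodup_cons] at hnd
  have hsupp : ∀ x ∈ (p₁.append (cons h p₂)).support, x ∈ (p₂.append p₁).support := by
    intro x hx
    simp only [mem_support_append_iff, support_cons, List.mem_cons] at hx ⊢
    rcases hx with hx | rfl | hx
    exacts [Or.inr hx, Or.inr p₁.end_mem_support, Or.inl hx]
  obtain ⟨q, hq⟩ := exists_walk_edges_subset _ (hsupp a ha) (hsupp b hb)
  refine ⟨q, fun e he => ?_⟩
  have he' := hq he
  simp only [edges_append, List.mem_append] at he'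
  constructor
  · simp only [edges_append, edges_cons, List.mem_append, List.mem_cons]
    tauto
  · rintro rfl
    exact he'.elim hnd.2.1.1 fun h₁ => hnd.2.2 _ h₁ _ List.mem_cons_self rfl

lemma IsCycle.length_le_ncard_support {w : V} {c : G.Walk w w} (hc : c.IsCycle) :
    c.length ≤ {v | v ∈ c.support}.ncard := by
  classical
  calc c.length = c.support.tail.toFinset.card := by
        rw [List.toFinset_card_of_nodup hc.support_nodup, List.length_tail, length_support]; rfl
    _ = {v | v ∈ c.support.tail}.ncard := by rw [← Set.ncard_coe_finset]; congr; ext; simp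
    _ ≤ _ := ncard_le_ncard (fun _ => List.mem_of_mem_tail) (List.finite_toSet _)

end SimpleGraph.Walk

lemma SimpleGraph.Coloring.four_le_ncard_support {V : Type*} {G : SimpleGraph V}
    (C : G.Coloring Bool) {w : V} {c : G.Walk w w} (hc : c.IsCycle) :
    4 ≤ {v | v ∈ c.support}.ncard := by
  obtain ⟨k, hk⟩ := (C.even_length_iff_congr c).2 Iff.rfl
  have h3 := hc.three_le_length
  have hle := hc.length_le_ncard_support
  omega

namespace IsCycleMatroidOf

variable {V : Type*} {G : SimpleGraph V} {M : Matroid (Sym2 V)}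

lemma isCircuit_edges (hM : IsCycleMatroidOf M G) {w : V} {c : G.Walk w w} (hc : c.IsCycle) :
    M.IsCircuit {e | e ∈ c.edges} :=
  isCircuitOf_iff_isCircuit.1 ((hM.2 _).2 ⟨w, c, hc, rfl⟩)

lemma three_le_ncard_of_isCircuit (hM : IsCycleMatroidOf M G) {C : Set (Sym2 V)}
    (hC : M.IsCircuit C) : 3 ≤ C.ncard := by
  classical
  obtain ⟨u, c, hc, rfl⟩ := (hM.2 C).1 (isCircuitOf_iff_isCircuit.2 hC)
  have hcoe : {e | e ∈ c.edges} = ↑c.edges.toFinset := by ext; simp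
  rw [hcoe, ncard_coe_finset, List.toFinset_card_of_nodup hc.edges_nodup, Walk.length_edges]
  exact hc.three_le_length

lemma indep_pair (hM : IsCycleMatroidOf M G) {e f : Sym2 V} (he : e ∈ M.E) (hf : f ∈ M.E) :
    M.Indep {e, f} := by
  by_contra hdep
  obtain ⟨C, hCef, hC⟩ :=
    ((Matroid.not_indep_iff (pair_subset he hf)).1 hdep).exists_isCircuit_subset
  have h3 := hM.three_le_ncard_of_isCircuit hC
  have hle := ncard_le_ncard hCef (toFinite _)
  have h2 := ncard_insert_le e {f}
  rw [ncard_singleton] at h2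
  omega

lemma not_indep_of_walk (hM : IsCycleMatroidOf M G) {a b : V} (hab : G.Adj a b)
    (p : G.Walk b a) (hp : s(a, b) ∉ p.edges) {T : Set (Sym2 V)}
    (hT : insert s(a, b) {e | e ∈ p.edges} ⊆ T) : ¬ M.Indep T := by
  classical
  have hcyc : (Walk.cons hab p.bypass).IsCycle :=
    (Walk.cons_isCycle_iff _ _).2 ⟨p.bypass_isPath, fun h => hp (p.edges_bypass_subset_edges h)⟩
  refine fun hind => (hM.isCircuit_edges hcyc).dep.not_indep (hind.subset fun e he => ?_)
  rcases List.mem_cons.1 he with rfl | he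
  exacts [hT (mem_insert _ _), hT (mem_insert_of_mem _ (p.edges_bypass_subset_edges he))]

lemma exists_indep_union_of_contract_indep (hM : IsCycleMatroidOf M G) {w : V}
    {c : G.Walk w w} (hc : c.IsCycle) {I : Set (Sym2 V)}
    (hI : (M ／ {e | e ∈ c.edges}).Indep I) :
    ∃ y ∈ c.edges, M.Indep (I ∪ ({e | e ∈ c.edges} \ {y})) := by
  obtain ⟨y, hy⟩ := List.exists_mem_of_ne_nil _ (mt Walk.edges_eq_nil.1 hc.not_nil)
  exact ⟨y, hy, (hM.isCircuit_edges hc).indep_union_of_contract_indep hy hI⟩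

lemma not_contract_indep_of_chord (hM : IsCycleMatroidOf M G) {w : V} {c : G.Walk w w}
    (hc : c.IsCycle) {a b : V} (hab : G.Adj a b) (hchord : s(a, b) ∉ c.edges)
    (ha : a ∈ c.support) (hb : b ∈ c.support) :
    ¬ (M ／ {e | e ∈ c.edges}).Indep {s(a, b)} := by
  intro hI
  obtain ⟨y, hy, hind⟩ := hM.exists_indep_union_of_contract_indep hc hI
  obtain ⟨q, hq⟩ := hc.exists_walk_edges_avoiding hy hb ha
  refine hM.not_indep_of_walk hab q (fun h => hchord (hq _ h).1) ?_ hind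
  rintro e (rfl | he)
  exacts [Or.inl rfl, Or.inr ⟨(hq e he).1, (hq e he).2⟩]

lemma not_contract_indep_of_vee (hM : IsCycleMatroidOf M G) {w : V} {c : G.Walk w w}
    (hc : c.IsCycle) {u x x' : V} (hu : u ∉ c.support) (hx : x ∈ c.support)
    (hx' : x' ∈ c.support) (hxx' : x ≠ x') (hux : G.Adj u x) (hux' : G.Adj u x') :
    ¬ (M ／ {e | e ∈ c.edges}).Indep {s(u, x), s(u, x')} := by
  intro hI
  obtain ⟨y, hy, hind⟩ := hM.exists_indep_union_of_contract_indep hc hI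
  obtain ⟨q, hq⟩ := hc.exists_walk_edges_avoiding hy hx hx'
  have hqu : s(u, x) ∉ q.edges := fun h => hu (c.fst_mem_support_of_mem_edges (hq _ h).1)
  refine hM.not_indep_of_walk hux (q.concat hux'.symm) ?_ ?_ hind
  · rw [Walk.edges_concat, List.concat_eq_append, List.mem_append, List.mem_singleton]
    rintro (h | h)
    · exact hqu h
    · rcases Sym2.eq_iff.1 h with ⟨rfl, -⟩ | ⟨-, rfl⟩
      exacts [hu hx', hxx' rfl]
  · rintro e (rfl | he)
    · exact Or.inl (Or.inl rfl)
    · rw [mem_ofPred_eq, Walk.edges_concat, List.concat_eq_append, List.mem_append,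
        List.mem_singleton] at he
      rcases he with he | rfl
      · exact Or.inr ⟨(hq e he).1, (hq e he).2⟩
      · exact Or.inl (Or.inr Sym2.eq_swap)

end IsCycleMatroidOf

section Collapse

variable {V : Type*} (P : Set V) [DecidablePred (· ∈ P)]

/-- The vertex map of the graph contraction that merges `P` into the new vertex `none`. -/
def collapse (v : V) : Option V := if v ∈ P then none else some v

variable {P}

lemma collapse_of_notMem {v : V} (hv : v ∉ P) : collapse P v = some v := if_neg hv

lemma collapse_eq_some_iff {a b : V} : collapse P a = some b ↔ a = b ∧ a ∉ P := by
  unfold collapse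
  split_ifs <;> simp_all

lemma collapse_eq_collapse_iff {a b : V} :
    collapse P a = collapse P b ↔ a = b ∨ a ∈ P ∧ b ∈ P := by
  unfold collapse
  split_ifs <;> grind

lemma injOn_map_collapse {S : Set (Sym2 V)} (hchord : ∀ a b, s(a, b) ∈ S → a ∈ P → b ∉ P)
    (hvee : ∀ u x x', u ∉ P → x ∈ P → x' ∈ P → s(u, x) ∈ S → s(u, x') ∈ S → x = x') :
    InjOn (Sym2.map (collapse P)) S := by
  have hout : ∀ e ∈ S, ∃ a b, a ∉ P ∧ e = s(a, b) := by
    rintro ⟨a, b⟩ he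
    by_cases ha : a ∈ P
    · exact ⟨b, a, hchord a b he ha, Sym2.eq_swap⟩
    · exact ⟨a, b, ha, rfl⟩
  intro e he e' he' h
  obtain ⟨a, b, ha, rfl⟩ := hout e he
  obtain ⟨a', b', ha', rfl⟩ := hout e' he'
  rw [Sym2.map_mk, Sym2.map_mk, collapse_of_notMem ha, collapse_of_notMem ha',
    Sym2.eq_iff] at h
  rcases h with ⟨h₁, h₂⟩ | ⟨h₁, h₂⟩
  · obtain rfl := Option.some.inj h₁
    rcases collapse_eq_collapse_iff.1 h₂ with rfl | ⟨hb, hb'⟩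
    · rfl
    · rw [hvee a b b' ha hb hb' he he']
  · obtain ⟨rfl, -⟩ := collapse_eq_some_iff.1 h₁.symm
    obtain ⟨rfl, -⟩ := collapse_eq_some_iff.1 h₂
    exact Sym2.eq_swap

end Collapse

lemma ncard_le_of_injOn_map_collapse {V : Type*} [Finite V] {G : SimpleGraph V}
    {P : Set V} [DecidablePred (· ∈ P)] (C : G.Coloring Bool) {S : Set (Sym2 V)}
    (hSG : S ⊆ G.edgeSet) (hchord : ∀ a b, s(a, b) ∈ S → a ∈ P → b ∉ P)
    (hinj : InjOn (Sym2.map (collapse P)) S) :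
    S.ncard ≤ Pᶜ.ncard + (Pᶜ ∩ {v | C v = true}).ncard * (Pᶜ \ {v | C v = true}).ncard := by
  set L₁ : Set (Sym2 (Option V)) := (fun v => s(none, some v)) '' Pᶜ
  set L₂ : Set (Sym2 (Option V)) := (fun p : V × V => s(some p.1, some p.2)) ''
    ((Pᶜ ∩ {v | C v = true}) ×ˢ (Pᶜ \ {v | C v = true}))
  have himage : Sym2.map (collapse P) '' S ⊆ L₁ ∪ L₂ := by
    rintro _ ⟨⟨a, b⟩, he, rfl⟩
    have hvalid : C a ≠ C b := C.valid (hSG he)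
    by_cases ha : a ∈ P <;> by_cases hb : b ∈ P
    · exact absurd hb (hchord a b he ha)
    · exact Or.inl ⟨b, hb, by simp [collapse, ha, hb]⟩
    · exact Or.inl ⟨a, ha, by simp [collapse, ha, hb, Sym2.eq_swap]⟩
    · right
      cases hCa : C a
      · exact ⟨(b, a), ⟨⟨hb, by simpa [hCa] using hvalid.symm⟩, ha, by simp [hCa]⟩,
          by simp [collapse, ha, hb, Sym2.eq_swap]⟩
      · exact ⟨(a, b), ⟨⟨ha, hCa⟩, hb, by simpa [hCa] using hvalid.symm⟩,
          by simp [collapse, ha, hb]⟩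
  calc S.ncard = (Sym2.map (collapse P) '' S).ncard := hinj.ncard_image.symm
    _ ≤ (L₁ ∪ L₂).ncard := ncard_le_ncard himage (toFinite _)
    _ ≤ L₁.ncard + L₂.ncard := ncard_union_le _ _
    _ ≤ _ := add_le_add (ncard_image_le (toFinite _))
        ((ncard_image_le (toFinite _)).trans ncard_prod.le)

lemma IsCycleMatroidOf.ncard_le_of_contract_indep_pair {V : Type*} [Finite V]
    {G : SimpleGraph V} {M : Matroid (Sym2 V)} (hM : IsCycleMatroidOf M G)
    (C : G.Coloring Bool)
    {w : V} {c : G.Walk w w} (hc : c.IsCycle) {S : Set (Sym2 V)}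
    (hS : S ⊆ M.E \ {e | e ∈ c.edges})
    (hpair : ∀ e ∈ S, ∀ f ∈ S, (M ／ {e | e ∈ c.edges}).Indep {e, f}) :
    S.ncard ≤ {v | v ∈ c.support}ᶜ.ncard +
      ({v | v ∈ c.support}ᶜ ∩ {v | C v = true}).ncard *
        ({v | v ∈ c.support}ᶜ \ {v | C v = true}).ncard := by
  classical
  have hSG : S ⊆ G.edgeSet := hM.1 ▸ hS.trans sdiff_subset
  have hchord : ∀ a b, s(a, b) ∈ S → a ∈ c.support → b ∉ c.support := fun a b he ha hb =>
    hM.not_contract_indep_of_chord hc (hSG he) (hS he).2 ha hb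
      (by simpa using hpair _ he _ he)
  refine ncard_le_of_injOn_map_collapse C hSG hchord (injOn_map_collapse hchord ?_)
  intro u x x' hu hx hx' hux hux'
  by_contra hne
  exact hM.not_contract_indep_of_vee hc hu hx hx' hne (hSG hux) (hSG hux')
    (hpair _ hux _ hux')

theorem not_hasMinorIso_mCon_of_bicoloring {V : Type*} [Finite V] {G : SimpleGraph V}
    (C : G.Coloring Bool) (hV : Nat.card V ≤ 8) {M : Matroid (Sym2 V)}
    (hM : IsCycleMatroidOf M G) {Y : Set (Sym2 V)} (hY : IsCircuitOf M Y) {β : Type*}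
    {N : Matroid β} (hN : 9 ≤ N.E.ncard) (hNpair : ∀ e ∈ N.E, ∀ f ∈ N.E, N.Indep {e, f}) :
    ¬ HasMinorIso (mCon M Y) N := by
  rintro ⟨M₀, hminor, hiso⟩
  obtain ⟨w, c, hc, rfl⟩ := (hM.2 Y).1 hY
  have hcount := hM.ncard_le_of_contract_indep_pair C hc hminor.ground_subset
    fun e he f hf => hminor.indep (hiso.indep_pair hNpair he hf)
  set P := {v | v ∈ c.support}
  have hP : P.ncard + Pᶜ.ncard ≤ 8 := (ncard_add_ncard_compl P).trans_le hV
  have hsplit := ncard_inter_add_ncard_sdiff_eq_ncard Pᶜ {v | C v = true}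
  have hP4 : 4 ≤ P.ncard := C.four_le_ncard_support hc
  rw [hiso.ncard_ground_eq] at hcount
  nlinarith [sq_nonneg ((Pᶜ ∩ {v | C v = true}).ncard - (Pᶜ \ {v | C v = true}).ncard : ℤ)]

lemma ncard_edgeSet_K5 : K5.edgeSet.ncard = 10 := by
  rw [K5, completeGraph_eq_top, ← coe_edgeFinset, ncard_coe_finset,
    card_edgeFinset_top_eq_card_choose_two]
  rfl

/-- For `G` being `K₃,₅` or `K₄,₄`, and every circuit `Y` of the cycle
matroid `M(G)`, the contraction `M(G)/Y` has no minor isomorphic to `M(K₅)`. -/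
theorem statement_5 {V : Type} (G : SimpleGraph V)
    (hG : Nonempty (G ≃g K35) ∨ Nonempty (G ≃g K44))
    (MG : Matroid (Sym2 V)) (hMG : IsCycleMatroidOf MG G)
    (Y : Set (Sym2 V)) (hY : IsCircuitOf MG Y)
    (M5 : Matroid (Sym2 (Fin 5))) (h5 : IsCycleMatroidOf M5 K5) :
    ¬ HasMinorIso (mCon MG Y) M5 := by
  have hK : ∀ {m n : ℕ}, (G ≃g completeBipartiteGraph (Fin m) (Fin n)) → m + n = 8 →
      ¬ HasMinorIso (mCon MG Y) M5 := fun ψ hmn =>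
    have : Finite V := .of_equiv _ ψ.toEquiv.symm
    not_hasMinorIso_mCon_of_bicoloring ((CompleteBipartiteGraph.bicoloring _ _).comp ψ.toHom)
      (by simp [Nat.card_congr ψ.toEquiv, hmn]) hMG hY
      (by rw [h5.1, ncard_edgeSet_K5]; omega) fun e he f hf => h5.indep_pair he hf
  rcases hG with ⟨⟨ψ⟩⟩ | ⟨⟨ψ⟩⟩
  exacts [hK ψ rfl, hK ψ rfl]
end SignedGraphs
end

section
/- Let G be K_{4,4}^- or K_{4,4}, and let G_v be any graph obtained from G by applying operation O2 to some vertex of G. Then there exists a circle X of G_v such that the contraction G_v/X has a minor isomorphic to K_{3,3}. -/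
/-! Split `v` into `v₁` (joined to `S₁`) and `v₂` (joined to `S₂`) and pick `y, y' ∈ S₁`,
`r, s ∈ S₂`: these are four neighbours of `v`, so they fill the side opposite to `v`, and in
`K₄,₄⁻` the vertex `v` is not an end of the missing edge. A vertex `x₁` on `v`'s side closes the
4-cycle `v₁ y x₁ y'`; once it is contracted to a single vertex `c`, the vertex `v₂` and the two
remaining vertices `x₂, x₃` of `v`'s side are all adjacent to `r`, `s` and `c`. In `K₄,₄⁻` the
roles of the three vertices `x₁, x₂, x₃` must be chosen so that the missing edge is avoided. -/

open SimpleGraph Function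

theorem injective_vecCons₃ {α : Type*} {x y z : α} (hxy : x ≠ y) (hxz : x ≠ z) (hyz : y ≠ z) :
    Injective ![x, y, z] := by
  intro i j h
  fin_cases i <;> fin_cases j <;> simp_all [eq_comm]

section Minors

variable {V W : Type*} {G : SimpleGraph V}

theorem hasGraphMinor_of_injective_hom {H : SimpleGraph W} (f : H →g G) (hf : Injective f) :
    HasGraphMinor G H := by
  refine ⟨fun w => {f w}, fun w => Set.singleton_nonempty _, fun w => ?_,
    fun w₁ w₂ h => Set.disjoint_singleton.2 (hf.ne h), fun w₁ w₂ h => ⟨_, rfl, _, rfl, f.map_adj h⟩⟩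
  rw [induce_singleton_eq_top]
  exact connected_top

theorem hasGraphMinor_K33 (a b : Fin 3 → V) (ha : Injective a) (hb : Injective b)
    (hab : ∀ i j, G.Adj (a i) (b j)) : HasGraphMinor G K33 := by
  refine hasGraphMinor_of_injective_hom ⟨Sum.elim a b, ?_⟩
    (ha.sumElim hb fun i j => (hab i j).ne)
  rintro (i | i) (j | j) h
  · simp [K33] at h
  · exact hab i j
  · exact (hab j i).symm
  · simp [K33] at h

end Minors

section Contraction

variable {V : Type*} {H : SimpleGraph V} {X : Set (Sym2 V)} {u w z : V}

theorem SimpleGraph.Walk.reachable_inf_fromEdgeSet_of_mem_support (p : H.Walk u w)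
    (hp : ∀ e ∈ p.edges, e ∈ X) (hz : z ∈ p.support) :
    (fromEdgeSet X ⊓ H).Reachable u z := by
  classical
  refine ((p.transfer _ fun e he => ?_).takeUntil z (by rwa [Walk.support_transfer])).reachable
  have he' := p.edges_subset_edgeSet he
  rw [edgeSet_inf, edgeSet_fromEdgeSet]
  exact ⟨⟨hp e he, H.not_isDiag_of_mem_edgeSet he'⟩, he'⟩

theorem notMem_of_notMem_edgeEndpoints (hu : u ∉ edgeEndpoints X) (w : V) : s(u, w) ∉ X :=
  fun h => hu ⟨_, h, Sym2.mem_mk_left u w⟩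

theorem eq_of_connectedComponentMk_eq (hu : u ∉ edgeEndpoints X)
    (h : (fromEdgeSet X ⊓ H).connectedComponentMk u = (fromEdgeSet X ⊓ H).connectedComponentMk z) :
    u = z := by
  obtain ⟨_ | ⟨hadj, _⟩⟩ := ConnectedComponent.exact h
  · rfl
  · exact absurd hadj.1.1 (notMem_of_notMem_edgeEndpoints hu _)

theorem contractGraph_adj_connectedComponentMk (hu : u ∉ edgeEndpoints X) (h : H.Adj u w) :
    (contractGraph H X).Adj ((fromEdgeSet X ⊓ H).connectedComponentMk u)
      ((fromEdgeSet X ⊓ H).connectedComponentMk w) := by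
  rw [contractGraph, fromRel_adj]
  exact ⟨fun he => h.ne (eq_of_connectedComponentMk_eq hu he),
    Or.inl ⟨u, w, h, notMem_of_notMem_edgeEndpoints hu w, rfl, rfl⟩⟩

theorem SimpleGraph.Walk.notMem_edgeEndpoints_of_notMem_support (p : H.Walk u w)
    (hz : z ∉ p.support) : z ∉ edgeEndpoints {e | e ∈ p.edges} := by
  rintro ⟨e, he, hze⟩
  induction e using Sym2.ind with
  | h x y =>
    rcases Sym2.mem_iff.1 hze with rfl | rfl
    exacts [hz (p.fst_mem_support_of_mem_edges he), hz (p.snd_mem_support_of_mem_edges he)]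

/-- The contracted walk becomes the third vertex of the side `{r, s, _}` of the `K₃,₃`. -/
theorem hasGraphMinor_K33_contractGraph_walk_edges (c : H.Walk u w) (a : Fin 3 → V)
    (r s : V) (ha : Injective a) (hrs : r ≠ s) (hac : ∀ i, a i ∉ c.support)
    (hrc : r ∉ c.support) (hsc : s ∉ c.support) (har : ∀ i, H.Adj (a i) r)
    (has : ∀ i, H.Adj (a i) s) (hau : ∀ i, ∃ z ∈ c.support, H.Adj (a i) z) :
    HasGraphMinor (contractGraph H {e | e ∈ c.edges}) K33 := by
  set K := fromEdgeSet {e | e ∈ c.edges} ⊓ H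
  have hend : ∀ x ∉ c.support, x ∉ edgeEndpoints {e | e ∈ c.edges} :=
    fun x => c.notMem_edgeEndpoints_of_notMem_support
  have hne : ∀ x ∉ c.support, ∀ y, x ≠ y → K.connectedComponentMk x ≠ K.connectedComponentMk y :=
    fun x hx y hxy h => hxy (eq_of_connectedComponentMk_eq (hend x hx) h)
  have hu : u ∈ c.support := c.start_mem_support
  refine hasGraphMinor_K33 (K.connectedComponentMk ∘ a)
    ![K.connectedComponentMk r, K.connectedComponentMk s, K.connectedComponentMk u]
    (fun i j h => ha (eq_of_connectedComponentMk_eq (hend _ (hac i)) h)) ?_ ?_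
  · exact injective_vecCons₃ (hne r hrc s hrs) (hne r hrc u (ne_of_mem_of_not_mem hu hrc).symm)
      (hne s hsc u (ne_of_mem_of_not_mem hu hsc).symm)
  · intro i j
    fin_cases j
    · exact contractGraph_adj_connectedComponentMk (hend _ (hac i)) (har i)
    · exact contractGraph_adj_connectedComponentMk (hend _ (hac i)) (has i)
    · obtain ⟨z, hz, hadj⟩ := hau i
      have hzu : K.connectedComponentMk u = K.connectedComponentMk z :=
        ConnectedComponent.eq.2 (c.reachable_inf_fromEdgeSet_of_mem_support (fun _ => id) hz)
      simpa [hzu] using contractGraph_adj_connectedComponentMk (hend _ (hac i)) hadj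

end Contraction

section OperationO2

variable {V : Type*} {G : SimpleGraph V} {v u w : V} {S₁ S₂ : Set V}

/-- In the graph split at `v` by O2, `v₁ y x₁ y'` is a circle, and after contracting it
`{v₂, x₂, x₃}` and `{r, s, v₁ y x₁ y'}` are the two sides of a `K₃,₃`. -/
def IsO2Frame (G : SimpleGraph V) (v y y' r s x₁ x₂ x₃ : V) : Prop :=
  [v, y, y', r, s, x₁, x₂, x₃].Nodup ∧ G.Adj x₁ y ∧ G.Adj x₁ y' ∧ G.Adj x₂ r ∧ G.Adj x₂ s ∧
    G.Adj x₃ r ∧ G.Adj x₃ s ∧ (G.Adj x₂ y ∨ G.Adj x₂ y') ∧ (G.Adj x₃ y ∨ G.Adj x₃ y')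

theorem o2Graph_adj_some_some (hu : u ≠ v) (hw : w ≠ v) (h : G.Adj u w) :
    (o2Graph G v S₁ S₂).Adj (some u) (some w) := by
  rw [o2Graph, fromRel_adj]
  exact ⟨by simp [h.ne], Or.inl (Or.inl ⟨u, w, hu, hw, h, rfl, rfl⟩)⟩

theorem o2Graph_adj_some_of_mem_left (hu : u ∈ S₁) (hne : u ≠ v) :
    (o2Graph G v S₁ S₂).Adj (some v) (some u) := by
  rw [o2Graph, fromRel_adj]
  exact ⟨by simp [Ne.symm hne], Or.inl (Or.inr (Or.inl ⟨u, hu, rfl, rfl⟩))⟩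

theorem o2Graph_adj_none_of_mem_right (hu : u ∈ S₂) : (o2Graph G v S₁ S₂).Adj none (some u) := by
  rw [o2Graph, fromRel_adj]
  exact ⟨by simp, Or.inl (Or.inr (Or.inr (Or.inl ⟨u, hu, rfl, rfl⟩)))⟩

theorem o2Graph_adj_some_none : (o2Graph G v S₁ S₂).Adj (some v) none := by
  rw [o2Graph, fromRel_adj]
  exact ⟨by simp, Or.inl (Or.inr (Or.inr (Or.inr ⟨rfl, rfl⟩)))⟩

theorem o2Graph_exists_isCycle {y y' x : V} (hy : y ∈ S₁) (hy' : y' ∈ S₁)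
    (hN : [v, y, y', x].Nodup) (hxy : G.Adj x y) (hxy' : G.Adj x y') :
    ∃ c : (o2Graph G v S₁ S₂).Walk (some v) (some v),
      c.IsCycle ∧ c.support = [some v, some y, some x, some y', some v] := by
  simp only [List.nodup_cons, List.mem_cons, List.not_mem_nil, or_false, not_or,
    List.nodup_nil, and_true, ← ne_eq] at hN
  obtain ⟨⟨hvy, hvy', hvx⟩, ⟨hyy', -⟩, -⟩ := hN
  refine ⟨.cons (o2Graph_adj_some_of_mem_left hy hvy.symm)
    (.cons (o2Graph_adj_some_some hvy.symm hvx.symm hxy.symm)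
      (.cons (o2Graph_adj_some_some hvx.symm hvy'.symm hxy')
        (.cons (o2Graph_adj_some_of_mem_left hy' hvy'.symm).symm .nil))), ?_, rfl⟩
  simp [Walk.cons_isCycle_iff, Walk.cons_isPath_iff, hvy, hvy', hvx, hyy', hxy.ne', hxy'.ne,
    hvy.symm, hvy'.symm, hvx.symm]

theorem IsO2Frame.exists_isGraphCircle_hasGraphMinor_K33 {y y' r s x₁ x₂ x₃ : V}
    (hF : IsO2Frame G v y y' r s x₁ x₂ x₃) (hy : y ∈ S₁) (hy' : y' ∈ S₁) (hr : r ∈ S₂)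
    (hs : s ∈ S₂) :
    ∃ X, IsGraphCircle (o2Graph G v S₁ S₂) X ∧
      HasGraphMinor (contractGraph (o2Graph G v S₁ S₂) X) K33 := by
  obtain ⟨hN, h₁y, h₁y', h₂r, h₂s, h₃r, h₃s, h₂, h₃⟩ := hF
  obtain ⟨c, hc, hcs⟩ := o2Graph_exists_isCycle (v := v) (S₂ := S₂) hy hy'
    (hN.sublist (by simp)) h₁y h₁y'
  simp only [List.nodup_cons, List.mem_cons, List.not_mem_nil, or_false, not_or,
    List.nodup_nil, and_true, ← ne_eq] at hN
  obtain ⟨⟨hvy, hvy', hvr, hvs, -, hv₂, hv₃⟩, ⟨-, hyr, hys, -, hy₂, hy₃⟩,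
    ⟨hy'r, hy's, -, hy'₂, hy'₃⟩, ⟨hrs, hr₁, -, -⟩, ⟨hs₁, -, -⟩, ⟨h₁₂, h₁₃⟩, h₂₃⟩ := hN
  have hoff : ∀ x, x ≠ v → x ≠ y → x ≠ x₁ → x ≠ y' → some x ∉ c.support := by
    intro x; simp [hcs]; tauto
  refine ⟨_, ⟨_, c, hc, rfl⟩, hasGraphMinor_K33_contractGraph_walk_edges c
    ![none, some x₂, some x₃] (some r) (some s) (injective_vecCons₃ (by simp) (by simp)
    (by simpa using h₂₃)) (by simpa using hrs) ?_ (hoff r hvr.symm hyr.symm hr₁ hy'r.symm)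
    (hoff s hvs.symm hys.symm hs₁ hy's.symm) ?_ ?_ ?_⟩
  · intro i
    fin_cases i
    · simp [hcs]
    · exact hoff x₂ hv₂.symm hy₂.symm h₁₂.symm hy'₂.symm
    · exact hoff x₃ hv₃.symm hy₃.symm h₁₃.symm hy'₃.symm
  · intro i
    fin_cases i
    · exact o2Graph_adj_none_of_mem_right hr
    · exact o2Graph_adj_some_some hv₂.symm hvr.symm h₂r
    · exact o2Graph_adj_some_some hv₃.symm hvr.symm h₃r
  · intro i
    fin_cases i
    · exact o2Graph_adj_none_of_mem_right hs
    · exact o2Graph_adj_some_some hv₂.symm hvs.symm h₂s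
    · exact o2Graph_adj_some_some hv₃.symm hvs.symm h₃s
  · intro i
    fin_cases i
    · exact ⟨some v, by simp [hcs], o2Graph_adj_some_none.symm⟩
    · rcases h₂ with h | h
      · exact ⟨some y, by simp [hcs], o2Graph_adj_some_some hv₂.symm hvy.symm h⟩
      · exact ⟨some y', by simp [hcs], o2Graph_adj_some_some hv₂.symm hvy'.symm h⟩
    · rcases h₃ with h | h
      · exact ⟨some y, by simp [hcs], o2Graph_adj_some_some hv₃.symm hvy.symm h⟩
      · exact ⟨some y', by simp [hcs], o2Graph_adj_some_some hv₃.symm hvy'.symm h⟩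

end OperationO2

section CompleteBipartite

open Sum

variable {G : SimpleGraph (Fin 4 ⊕ Fin 4)}

theorem exists_eq_inr_of_adj_inl (hG : G = K44minus ∨ G = K44) {i : Fin 4} {y : Fin 4 ⊕ Fin 4}
    (h : G.Adj (inl i) y) : ∃ a, y = inr a := by
  have hK : K44.Adj (inl i) y := by
    rcases hG with rfl | rfl
    exacts [deleteEdges_le _ h, h]
  cases y with
  | inl _ => simp [K44] at hK
  | inr a => exact ⟨a, rfl⟩

theorem adj_swap_iff (hG : G = K44minus ∨ G = K44) {x y : Fin 4 ⊕ Fin 4} :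
    G.Adj x.swap y.swap ↔ G.Adj x y := by
  rcases hG with rfl | rfl <;> cases x <;> cases y <;> simp [K44minus, K44, and_comm]

theorem adj_inl_inr_eq (hG : G = K44minus ∨ G = K44) :
    (fun k a => G.Adj (inl k) (inr a)) = (fun k a => ¬(k = 0 ∧ a = 0)) ∨
      (fun k a => G.Adj (inl k) (inr a)) = fun _ _ => True := by
  rcases hG with rfl | rfl
  · left; funext k a; simp [K44minus, K44]
  · right; funext k a; simp [K44]

-- `E k a` is the adjacency of `inl k` and `inr a`; `K₄,₄⁻` lacks the edge `inl 0 — inr 0`.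
set_option synthInstance.maxSize 1000 in
set_option synthInstance.maxHeartbeats 400000 in
theorem exists_o2_indices {E : Fin 4 → Fin 4 → Prop}
    (hE : E = (fun k a => ¬(k = 0 ∧ a = 0)) ∨ E = fun _ _ => True) (i a₁ a₂ a₃ a₄ : Fin 4)
    (ha : [a₁, a₂, a₃, a₄].Nodup) (h₁ : E i a₁) (h₂ : E i a₂) (h₃ : E i a₃) (h₄ : E i a₄) :
    ∃ k₁ k₂ k₃, [i, k₁, k₂, k₃].Nodup ∧ E k₁ a₁ ∧ E k₁ a₂ ∧ E k₂ a₃ ∧ E k₂ a₄ ∧ E k₃ a₃ ∧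
      E k₃ a₄ ∧ (E k₂ a₁ ∨ E k₂ a₂) ∧ (E k₃ a₁ ∨ E k₃ a₂) := by
  revert i a₁ a₂ a₃ a₄
  rcases hE with rfl | rfl <;> beta_reduce <;> decide

theorem exists_isO2Frame_inl (hG : G = K44minus ∨ G = K44) {i : Fin 4} {y y' r s : Fin 4 ⊕ Fin 4}
    (hy : G.Adj (inl i) y) (hy' : G.Adj (inl i) y') (hr : G.Adj (inl i) r) (hs : G.Adj (inl i) s)
    (hN : [y, y', r, s].Nodup) : ∃ x₁ x₂ x₃, IsO2Frame G (inl i) y y' r s x₁ x₂ x₃ := by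
  obtain ⟨a₁, rfl⟩ := exists_eq_inr_of_adj_inl hG hy
  obtain ⟨a₂, rfl⟩ := exists_eq_inr_of_adj_inl hG hy'
  obtain ⟨a₃, rfl⟩ := exists_eq_inr_of_adj_inl hG hr
  obtain ⟨a₄, rfl⟩ := exists_eq_inr_of_adj_inl hG hs
  obtain ⟨k₁, k₂, k₃, hk, hadj⟩ := exists_o2_indices (adj_inl_inr_eq hG) i a₁ a₂ a₃ a₄
    (by simpa using hN) hy hy' hr hs
  refine ⟨inl k₁, inl k₂, inl k₃, ?_, hadj⟩
  simp only [List.nodup_cons, List.mem_cons, List.not_mem_nil, or_false, not_or,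
    List.nodup_nil, and_true, inl.injEq, inr.injEq, reduceCtorEq, not_false_eq_true,
    true_and, and_self] at hk hN ⊢
  tauto

theorem isO2Frame_swap_iff (hG : G = K44minus ∨ G = K44) {v y y' r s x₁ x₂ x₃ : Fin 4 ⊕ Fin 4} :
    IsO2Frame G v.swap y.swap y'.swap r.swap s.swap x₁.swap x₂.swap x₃.swap ↔
      IsO2Frame G v y y' r s x₁ x₂ x₃ := by
  simp [IsO2Frame, adj_swap_iff hG, swap_leftInverse.injective.eq_iff]

theorem exists_isO2Frame (hG : G = K44minus ∨ G = K44) {v y y' r s : Fin 4 ⊕ Fin 4}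
    (hy : G.Adj v y) (hy' : G.Adj v y') (hr : G.Adj v r) (hs : G.Adj v s)
    (hN : [y, y', r, s].Nodup) : ∃ x₁ x₂ x₃, IsO2Frame G v y y' r s x₁ x₂ x₃ := by
  cases v with
  | inl i => exact exists_isO2Frame_inl hG hy hy' hr hs hN
  | inr i =>
    rw [← adj_swap_iff hG] at hy hy' hr hs
    obtain ⟨x₁, x₂, x₃, hF⟩ := exists_isO2Frame_inl hG hy hy' hr hs
      (by simpa [swap_leftInverse.injective.eq_iff] using hN)
    exact ⟨x₁.swap, x₂.swap, x₃.swap, by simpa using (isO2Frame_swap_iff hG).2 hF⟩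

end CompleteBipartite

/-- Let `G` be `K₄,₄⁻` or `K₄,₄` and let `G_v` be obtained from `G` by
applying operation O2 to some vertex. Then some circle `X` of `G_v` satisfies: `G_v/X`
has a `K₃,₃`-minor. -/
theorem statement_14 (G : SimpleGraph (Fin 4 ⊕ Fin 4)) (hG : G = K44minus ∨ G = K44)
    (v : Fin 4 ⊕ Fin 4) (S₁ S₂ : Set (Fin 4 ⊕ Fin 4)) (hO2 : IsO2Partition G v S₁ S₂) :
    ∃ X : Set (Sym2 (Option (Fin 4 ⊕ Fin 4))),
      IsGraphCircle (o2Graph G v S₁ S₂) X ∧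
      HasGraphMinor (contractGraph (o2Graph G v S₁ S₂) X) K33 := by
  obtain ⟨-, hS, hdisj, h₁, h₂⟩ := hO2
  obtain ⟨y, hy, y', hy', hyy'⟩ := (Set.one_lt_ncard S₁.toFinite).1 h₁
  obtain ⟨r, hr, s, hs, hrs⟩ := (Set.one_lt_ncard S₂.toFinite).1 h₂
  have hadj₁ : ∀ x ∈ S₁, G.Adj v x := fun x hx => (hS ▸ Or.inl hx : x ∈ G.neighborSet v)
  have hadj₂ : ∀ x ∈ S₂, G.Adj v x := fun x hx => (hS ▸ Or.inr hx : x ∈ G.neighborSet v)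
  obtain ⟨x₁, x₂, x₃, hF⟩ := exists_isO2Frame hG (hadj₁ y hy) (hadj₁ y' hy') (hadj₂ r hr)
    (hadj₂ s hs) (by simp [hyy', hrs, hdisj.ne_of_mem hy hr, hdisj.ne_of_mem hy hs,
      hdisj.ne_of_mem hy' hr, hdisj.ne_of_mem hy' hs])
  exact hF.exists_isGraphCircle_hasGraphMinor_K33 hy hy' hr hs
end
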